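/- Let $A = \bigoplus_{i \in \mathbb{Z}/p^r} A_i$ be a commutative ring graded by $\mathbb{Z}/p^r$ ($p$ prime, $r \geq 1$), let $K$ be a field, and let $f : A \to K$ be a ring homomorphism. Let $H^*$ be a nontrivial subgroup of $\mathbb{Z}/p^r$, and suppose that $f$ vanishes on $A_j$ for every $j \in H^* \setminus \{0\}$. Then $f$ vanishes on $A_i$ for every $i \in \mathbb{Z}/p^r \setminus \{0\}$. -/

import Mathlib

/-!
Every nonzero `x` in `ZMod (p ^ r)` has `p ^ (r - 1)` among its multiples, since
`gcd(x, p ^ r) = p ^ k` with `k < r`; hence every nontrivial subgroup contains `p ^ (r - 1)`.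
For `a` homogeneous of degree `i ≠ 0`, some power `a ^ n` therefore has degree
`p ^ (r - 1) ∈ H`, so `f a ^ n = f (a ^ n) = 0`, and `f a = 0` because `K` is reduced.
-/

theorem SetLike.map_eq_zero_of_forall_mem_nsmul {ι A σ R F : Type*} [AddMonoid ι] [Monoid A]
    [SetLike σ A] {𝒜 : ι → σ} [SetLike.GradedMonoid 𝒜] [MonoidWithZero R] [IsReduced R]
    [FunLike F A R] [MonoidHomClass F A R] {f : F} {i : ι} {n : ℕ}
    (hf : ∀ b ∈ 𝒜 (n • i), f b = 0) {a : A} (ha : a ∈ 𝒜 i) : f a = 0 :=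
  IsNilpotent.eq_zero ⟨n, by rw [← map_pow]; exact hf _ (SetLike.pow_mem_graded n ha)⟩

namespace ZMod

variable {p r : ℕ}

theorem exists_nsmul_eq_prime_pow_pred (hp : p.Prime) {x : ZMod (p ^ r)} (hx : x ≠ 0) :
    ∃ n : ℕ, n • x = (p : ZMod (p ^ r)) ^ (r - 1) := by
  have : NeZero (p ^ r) := ⟨pow_ne_zero r hp.ne_zero⟩
  obtain ⟨k, hkr, hk⟩ := (Nat.dvd_prime_pow hp).mp (Nat.gcd_dvd_right x.val (p ^ r))
  have hk_lt : k < r := by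
    refine lt_of_le_of_ne hkr fun hkr => hx ?_
    have hdvd := Nat.gcd_dvd_left x.val (p ^ r)
    rw [hk, hkr] at hdvd
    exact val_eq_zero x |>.mp (Nat.eq_zero_of_dvd_of_lt hdvd (val_lt x))
  -- `x⁻¹` in `ZMod` is a Bézout coefficient: `x * x⁻¹ = gcd x.val (p ^ r)`.
  refine ⟨((p : ZMod (p ^ r)) ^ (r - 1 - k) * x⁻¹).val, ?_⟩
  rw [nsmul_eq_mul, natCast_zmod_val, mul_assoc, mul_comm x⁻¹, mul_inv_eq_gcd, hk,
    Nat.cast_pow, ← pow_add]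
  congr 1
  omega

theorem prime_pow_pred_mem (hp : p.Prime) {H : AddSubgroup (ZMod (p ^ r))} (hH : H ≠ ⊥) :
    (p : ZMod (p ^ r)) ^ (r - 1) ∈ H := by
  obtain ⟨h, hhH, hh⟩ := H.bot_or_exists_ne_zero.resolve_left hH
  obtain ⟨n, hn⟩ := exists_nsmul_eq_prime_pow_pred hp hh
  exact hn ▸ H.nsmul_mem hhH n

theorem prime_pow_pred_ne_zero (hp : p.Prime) (hr : 1 ≤ r) :
    (p : ZMod (p ^ r)) ^ (r - 1) ≠ 0 := by
  rw [← Nat.cast_pow, Ne, natCast_eq_zero_iff]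
  exact Nat.pow_dvd_pow_iff_le_right hp.one_lt |>.not.mpr (by omega)

end ZMod

/-- If a ring homomorphism from a `ZMod (p ^ r)`-graded commutative ring to a field
vanishes on the homogeneous components of nonzero degrees belonging to a nontrivial
subgroup, then it vanishes on all homogeneous components of nonzero degree. -/
theorem stmt3 (p r : ℕ) (hp : p.Prime) (hr : 1 ≤ r)
    (A : Type*) [CommRing A] (𝒜 : ZMod (p ^ r) → AddSubgroup A) [GradedRing 𝒜]
    (K : Type*) [Field K] (f : A →+* K)
    (H : AddSubgroup (ZMod (p ^ r))) (hHne : H ≠ ⊥)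
    (hf : ∀ j ∈ H, j ≠ 0 → ∀ a ∈ 𝒜 j, f a = 0) :
    ∀ i : ZMod (p ^ r), i ≠ 0 → ∀ a ∈ 𝒜 i, f a = 0 := by
  intro i hi a ha
  obtain ⟨n, hn⟩ := ZMod.exists_nsmul_eq_prime_pow_pred hp hi
  refine SetLike.map_eq_zero_of_forall_mem_nsmul (n := n) ?_ ha
  rw [hn]
  exact hf _ (ZMod.prime_pow_pred_mem hp hHne) (ZMod.prime_pow_pred_ne_zero hp hr)
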